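/- The 2-level Babel apartment Σ(2, A₁) = ⋃_{w ∈ W₂(A₁)} w[0,1] ⊂ ℤ lex× ℝ decomposes as the disjoint union ⨆_{n ∈ ℤ} (2n·ω₂ + ℝ), where W₂(A₁) is generated by the reflections x ↦ −x, x ↦ 2ω₁ − x, x ↦ 2ω₂ − x acting on ℤ lex× ℝ (with ω₁ = (0,1), ω₂ = (1,0)). -/

import Mathlib

/-- The fundamental chamber `[0,1] = {(0,t) : 0 ≤ t ≤ 1}` in `ℤ ×_lex ℝ` (the relevant
part of `²*ℝ`). -/
def babelChamberA1 : Set (ℤ × ℝ) := {p | p.1 = 0 ∧ 0 ≤ p.2 ∧ p.2 ≤ 1}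

/-- The 2-level Weyl group `W₂(A₁)` of Parshin's presentation, generated by the
reflections `x ↦ −x`, `x ↦ 2ω₁ − x`, `x ↦ 2ω₂ − x` with `ω₁ = (0,1)`, `ω₂ = (1,0)`. -/
def babelWeylA1 : Subgroup (Equiv.Perm (ℤ × ℝ)) :=
  Subgroup.closure
    {Equiv.subLeft ((0 : ℤ), (0 : ℝ)),
     Equiv.subLeft ((0 : ℤ), (2 : ℝ)),
     Equiv.subLeft ((2 : ℤ), (0 : ℝ))}

/-! Every generator `x ↦ c - x` of `W₂(A₁)` has `c ∈ 2ℤ × ℝ`, so the group preserves the subgroup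
`2ℤ × ℝ`, which contains the chamber. Conversely, products of two generators give all translations
by `2ℤ × 2ℤ`, and each point `(2n, t)` is `v + (0, s)` or `v - (0, s)` for such a vector `v` and
some `s ∈ [0, 1]`. -/

open scoped Pointwise

section SubLeftClosure

variable {G : Type*} [AddCommGroup G]

lemma subLeft_mul_subLeft (a b : G) :
    (Equiv.subLeft a * Equiv.subLeft b : Equiv.Perm G) = Equiv.addLeft (a - b) := by
  ext x
  simp only [Equiv.Perm.mul_apply, Equiv.subLeft_apply, Equiv.coe_addLeft]
  abel

lemma addLeft_mul_subLeft (a b : G) :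
    (Equiv.addLeft a * Equiv.subLeft b : Equiv.Perm G) = Equiv.subLeft (a + b) := by
  ext x
  simp only [Equiv.Perm.mul_apply, Equiv.subLeft_apply, Equiv.coe_addLeft]
  abel

lemma addLeft_mem_closure_subLeft {s : Set G} (h₀ : (0 : G) ∈ s) {a : G}
    (ha : a ∈ AddSubgroup.closure s) :
    Equiv.addLeft a ∈ Subgroup.closure (Equiv.subLeft '' s) := by
  have mem_of_mem {b : G} (hb : b ∈ s) :
      Equiv.subLeft b ∈ Subgroup.closure (Equiv.subLeft '' s) :=
    Subgroup.subset_closure (Set.mem_image_of_mem _ hb)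
  induction ha using AddSubgroup.closure_induction with
  | mem b hb =>
    simpa [subLeft_mul_subLeft] using Subgroup.mul_mem _ (mem_of_mem hb) (mem_of_mem h₀)
  | zero => simp
  | add b c _ _ hb hc => simpa using Subgroup.mul_mem _ hb hc
  | neg b _ hb => simpa using Subgroup.inv_mem _ hb

lemma subLeft_mem_closure_subLeft {s : Set G} (h₀ : (0 : G) ∈ s) {a : G}
    (ha : a ∈ AddSubgroup.closure s) :
    Equiv.subLeft a ∈ Subgroup.closure (Equiv.subLeft '' s) := by
  simpa [addLeft_mul_subLeft] using Subgroup.mul_mem _ (addLeft_mem_closure_subLeft h₀ ha)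
    (Subgroup.subset_closure (Set.mem_image_of_mem _ h₀))

lemma subLeft_mem_stabilizer (K : AddSubgroup G) {a : G} (ha : a ∈ K) :
    Equiv.subLeft a ∈ MulAction.stabilizer (Equiv.Perm G) (K : Set G) :=
  MulAction.mem_stabilizer_set.2 fun x ↦ by
    simp only [Equiv.Perm.smul_def, Equiv.subLeft_apply, SetLike.mem_coe, sub_eq_add_neg,
      K.add_mem_cancel_left ha, neg_mem_iff]

end SubLeftClosure

lemma exists_int_eq_two_mul_add_or_sub (t : ℝ) :
    ∃ k : ℤ, ∃ s ∈ Set.Icc (0 : ℝ) 1, t = 2 * k + s ∨ t = 2 * k - s := by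
  have h := abs_sub_round (t / 2)
  refine ⟨round (t / 2), |t - 2 * round (t / 2)|, ⟨abs_nonneg _, ?_⟩, ?_⟩
  · rw [abs_le] at h ⊢; constructor <;> linarith
  · rcases abs_cases (t - 2 * round (t / 2)) with ⟨h, -⟩ | ⟨h, -⟩ <;> rw [h] <;> simp

def babelReflectionCentresA1 : Set (ℤ × ℝ) := {((0 : ℤ), (0 : ℝ)), (0, 2), (2, 0)}

lemma babelWeylA1_eq_closure_image_subLeft :
    babelWeylA1 = Subgroup.closure (Equiv.subLeft '' babelReflectionCentresA1) := by
  simp only [babelWeylA1, babelReflectionCentresA1, Set.image_insert_eq, Set.image_singleton]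

lemma two_mul_mem_closure_babelReflectionCentresA1 (n m : ℤ) :
    ((2 * n : ℤ), (2 * m : ℝ)) ∈ AddSubgroup.closure babelReflectionCentresA1 := by
  have hx : ((2 : ℤ), (0 : ℝ)) ∈ AddSubgroup.closure babelReflectionCentresA1 :=
    AddSubgroup.subset_closure (by simp [babelReflectionCentresA1])
  have hy : ((0 : ℤ), (2 : ℝ)) ∈ AddSubgroup.closure babelReflectionCentresA1 :=
    AddSubgroup.subset_closure (by simp [babelReflectionCentresA1])
  convert add_mem (zsmul_mem hx n) (zsmul_mem hy m) using 1
  simp [mul_comm]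

lemma addLeft_mem_babelWeylA1 (n m : ℤ) :
    Equiv.addLeft ((2 * n : ℤ), (2 * m : ℝ)) ∈ babelWeylA1 :=
  babelWeylA1_eq_closure_image_subLeft ▸ addLeft_mem_closure_subLeft (Set.mem_insert _ _)
    (two_mul_mem_closure_babelReflectionCentresA1 n m)

lemma subLeft_mem_babelWeylA1 (n m : ℤ) :
    Equiv.subLeft ((2 * n : ℤ), (2 * m : ℝ)) ∈ babelWeylA1 :=
  babelWeylA1_eq_closure_image_subLeft ▸ subLeft_mem_closure_subLeft (Set.mem_insert _ _)
    (two_mul_mem_closure_babelReflectionCentresA1 n m)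

def evenLinesA1 : AddSubgroup (ℤ × ℝ) := (AddSubgroup.zmultiples 2).prod ⊤

lemma mem_evenLinesA1 {p : ℤ × ℝ} : p ∈ evenLinesA1 ↔ 2 ∣ p.1 := by
  simp [evenLinesA1, AddSubgroup.mem_prod, Int.mem_zmultiples_iff]

lemma babelWeylA1_le_stabilizer :
    babelWeylA1 ≤ MulAction.stabilizer (Equiv.Perm (ℤ × ℝ)) (evenLinesA1 : Set (ℤ × ℝ)) := by
  rw [babelWeylA1_eq_closure_image_subLeft, Subgroup.closure_le]
  rintro _ ⟨a, ha, rfl⟩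
  refine subLeft_mem_stabilizer _ (mem_evenLinesA1.2 ?_)
  rcases ha with rfl | rfl | rfl <;> simp

lemma two_dvd_fst_apply_of_mem_babelChamberA1 {w : Equiv.Perm (ℤ × ℝ)}
    (hw : w ∈ babelWeylA1) {p : ℤ × ℝ} (hp : p ∈ babelChamberA1) : 2 ∣ (w p).1 :=
  mem_evenLinesA1.1 <| (MulAction.mem_stabilizer_set.1 (babelWeylA1_le_stabilizer hw) p).2 <|
    mem_evenLinesA1.2 (hp.1 ▸ dvd_zero 2)

lemma exists_mem_babelWeylA1_apply_mem_babelChamberA1 {q : ℤ × ℝ} (hq : 2 ∣ q.1) :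
    ∃ w ∈ babelWeylA1, ∃ p ∈ babelChamberA1, w p = q := by
  rcases q with ⟨_, t⟩
  obtain ⟨n, rfl⟩ := hq
  obtain ⟨k, s, hs, rfl | rfl⟩ := exists_int_eq_two_mul_add_or_sub t
  · exact ⟨_, addLeft_mem_babelWeylA1 n k, (0, s), ⟨rfl, hs⟩, by simp⟩
  · exact ⟨_, subLeft_mem_babelWeylA1 n k, (0, s), ⟨rfl, hs⟩, by simp⟩

/-- The 2-level Babel apartment `Σ(2,A₁) = ⋃_{w ∈ W₂(A₁)} w[0,1]` inside
`ℤ ×_lex ℝ` decomposes as the disjoint union `⨆_{n ∈ ℤ} (2n·ω₂ + ℝ)` of affine lines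
`{(2n,t) : t ∈ ℝ}`. -/
theorem babelApartmentA1_decomposition :
    ((⋃ w ∈ babelWeylA1, (w : Equiv.Perm (ℤ × ℝ)) '' babelChamberA1)
      = ⋃ n : ℤ, {p : ℤ × ℝ | p.1 = 2 * n}) ∧
    (∀ n m : ℤ, n ≠ m →
      {p : ℤ × ℝ | p.1 = 2 * n} ∩ {p : ℤ × ℝ | p.1 = 2 * m} = ∅) := by
  refine ⟨Set.Subset.antisymm ?_ ?_, fun n m hnm ↦ Set.eq_empty_of_forall_notMem ?_⟩
  · refine Set.iUnion₂_subset fun w hw ↦ Set.image_subset_iff.2 fun p hp ↦ ?_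
    exact Set.mem_iUnion.2 (two_dvd_fst_apply_of_mem_babelChamberA1 hw hp)
  · intro q hq
    obtain ⟨w, hw, p, hp, rfl⟩ :=
      exists_mem_babelWeylA1_apply_mem_babelChamberA1 (Set.mem_iUnion.1 hq)
    exact Set.mem_biUnion hw (Set.mem_image_of_mem w hp)
  · rintro p ⟨hn : p.1 = 2 * n, hm : p.1 = 2 * m⟩
    exact hnm (by omega)
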